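/- arXiv:1911.00156 — 2 statements merged into one kernel-verified Lean document; each statement's English description precedes it below -/
import Mathlib

section
/- Let a : I × M → ℝ on finite nonempty sets I, M define a zero-sum game with bilinear payoff u(π,τ) = Σᵢ Σₘ a(i,m)π(i)τ(m). Suppose (π*, U*) is optimal for the linear program: maximize U subject to Σᵢ a(i,m)π(i) ≥ U for all m ∈ M, Σᵢ π(i) = 1, π(i) ≥ 0; and (τ*, V*) is optimal for: minimize V subject to Σₘ a(i,m)τ(m) ≤ V for all i ∈ I, Σₘ τ(m) = 1, τ(m) ≥ 0. If U* = V*, then (π*, τ*) is a Nash equilibrium of the zero-sum game. -/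
/-!
Averaging the row constraints of `τ*` against any mixed `π` gives `u(π, τ*) ≤ V*`, and averaging
the column constraints of `π*` against any mixed `τ` gives `U* ≤ u(π*, τ)`. Applied at
`(π*, τ*)`, the two bounds and `U* = V*` force `u(π*, τ*) = V*`, which turns them into the
saddle-point inequalities.
-/

open Finset

/-- A mixed strategy on a finite set: a probability mass function. -/
def IsMixed {S : Type*} [Fintype S] (p : S → ℝ) : Prop :=
  (∀ s, 0 ≤ p s) ∧ ∑ s, p s = 1

/-- Bilinear extension of payoff matrix `a`. -/
noncomputable def zsPay {I M : Type*} [Fintype I] [Fintype M]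
    (a : I × M → ℝ) (π : I → ℝ) (τ : M → ℝ) : ℝ :=
  ∑ i, ∑ m, a (i, m) * π i * τ m

namespace IsMixed

variable {S : Type*} [Fintype S] {p f : S → ℝ} {c : ℝ}

theorem sum_mul_le (hp : IsMixed p) (hf : ∀ s, f s ≤ c) : ∑ s, p s * f s ≤ c :=
  calc ∑ s, p s * f s ≤ ∑ s, p s * c :=
        sum_le_sum fun s _ => mul_le_mul_of_nonneg_left (hf s) (hp.1 s)
    _ = c := by rw [← sum_mul, hp.2, one_mul]

theorem le_sum_mul (hp : IsMixed p) (hf : ∀ s, c ≤ f s) : c ≤ ∑ s, f s * p s :=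
  calc c = ∑ s, c * p s := by rw [← mul_sum, hp.2, mul_one]
    _ ≤ ∑ s, f s * p s :=
        sum_le_sum fun s _ => mul_le_mul_of_nonneg_right (hf s) (hp.1 s)

end IsMixed

section zsPay

variable {I M : Type*} [Fintype I] [Fintype M] (a : I × M → ℝ) (π : I → ℝ) (τ : M → ℝ)

theorem zsPay_eq_sum_mul_sum : zsPay a π τ = ∑ i, π i * ∑ m, a (i, m) * τ m := by
  simp only [zsPay, mul_sum]
  exact sum_congr rfl fun i _ => sum_congr rfl fun m _ => by ring

theorem zsPay_eq_sum_sum_mul : zsPay a π τ = ∑ m, (∑ i, a (i, m) * π i) * τ m := by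
  rw [zsPay, sum_comm]
  simp only [sum_mul]

variable {a π τ}

theorem zsPay_le_of_forall_row_le {V : ℝ} (hπ : IsMixed π)
    (hV : ∀ i, ∑ m, a (i, m) * τ m ≤ V) : zsPay a π τ ≤ V :=
  zsPay_eq_sum_mul_sum a π τ ▸ hπ.sum_mul_le hV

theorem le_zsPay_of_forall_le_col {U : ℝ} (hτ : IsMixed τ)
    (hU : ∀ m, U ≤ ∑ i, a (i, m) * π i) : U ≤ zsPay a π τ :=
  zsPay_eq_sum_sum_mul a π τ ▸ hτ.le_sum_mul hU

end zsPay

theorem stmt_8_general {I M : Type*} [Fintype I] [Fintype M]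
    (a : I × M → ℝ) (πs : I → ℝ) (τs : M → ℝ) (Us Vs : ℝ)
    -- (πs, Us) is feasible for the max LP
    (hπfeas : IsMixed πs) (hUfeas : ∀ m, Us ≤ ∑ i, a (i, m) * πs i)
    -- (τs, Vs) is feasible for the min LP
    (hτfeas : IsMixed τs) (hVfeas : ∀ i, ∑ m, a (i, m) * τs m ≤ Vs)
    (hUV : Us = Vs) :
    -- then (πs, τs) is a Nash equilibrium of the zero-sum game
    (∀ π, IsMixed π → zsPay a π τs ≤ zsPay a πs τs) ∧
    (∀ τ, IsMixed τ → zsPay a πs τs ≤ zsPay a πs τ) := by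
  have hval : zsPay a πs τs = Vs :=
    le_antisymm (zsPay_le_of_forall_row_le hπfeas hVfeas)
      (hUV ▸ le_zsPay_of_forall_le_col hτfeas hUfeas)
  exact ⟨fun π hπ => hval ▸ zsPay_le_of_forall_row_le hπ hVfeas,
    fun τ hτ => hval ▸ hUV ▸ le_zsPay_of_forall_le_col hτ hUfeas⟩

theorem stmt_8 {I M : Type*} [Fintype I] [Fintype M] [Nonempty I] [Nonempty M]
    (a : I × M → ℝ) (πs : I → ℝ) (τs : M → ℝ) (Us Vs : ℝ)
    -- (πs, Us) is feasible for the max LP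
    (hπfeas : IsMixed πs) (hUfeas : ∀ m, Us ≤ ∑ i, a (i, m) * πs i)
    -- and optimal: any feasible (π, U) has U ≤ Us
    (hUopt : ∀ (π : I → ℝ) (U : ℝ), IsMixed π →
      (∀ m, U ≤ ∑ i, a (i, m) * π i) → U ≤ Us)
    -- (τs, Vs) is feasible for the min LP
    (hτfeas : IsMixed τs) (hVfeas : ∀ i, ∑ m, a (i, m) * τs m ≤ Vs)
    -- and optimal: any feasible (τ, V) has Vs ≤ V
    (hVopt : ∀ (τ : M → ℝ) (V : ℝ), IsMixed τ →
      (∀ i, ∑ m, a (i, m) * τ m ≤ V) → Vs ≤ V)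
    (hUV : Us = Vs) :
    -- then (πs, τs) is a Nash equilibrium of the zero-sum game
    (∀ π, IsMixed π → zsPay a π τs ≤ zsPay a πs τs) ∧
    (∀ τ, IsMixed τ → zsPay a πs τs ≤ zsPay a πs τ) :=
  stmt_8_general a πs τs Us Vs hπfeas hUfeas hτfeas hVfeas hUV
end

section
/- Let E(t) = Γ(N, Nt/σ²)/Γ(N) + Σᵢ [1 - Γ(N, Nt/(Pᵢ+σ²))/Γ(N)] πᵢ for t ≥ 0, with σ² > 0, Pᵢ > 0 for all i, πᵢ ≥ 0, Σᵢ πᵢ = 1 and at least one πᵢ > 0, and natural N ≥ 1. Then E is differentiable on (0,∞) with E'(t) = (N/Γ(N)) (Nt)^(N-1) [ Σᵢ πᵢ (Pᵢ+σ²)^(-N) exp(-Nt/(Pᵢ+σ²)) − σ^(-2N) exp(-Nt/σ²) ], and there exists t₀ > 0 such that E'(t) < 0 for all t ∈ (0, t₀); in particular inf_{t≥0} E(t) < 1. -/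
open MeasureTheory Finset

/-- Upper incomplete gamma function `Γ(N, a) = ∫ₐ^∞ u^(N-1) e^(-u) du`. -/
noncomputable def uGamma (N : ℕ) (a : ℝ) : ℝ :=
  ∫ u in Set.Ioi a, u ^ (N - 1) * Real.exp (-u)

lemma aux_cont (n : ℕ) : Continuous (fun u : ℝ => u ^ n * Real.exp (-u)) := by
  fun_prop

lemma aux_intOn (n : ℕ) (a : ℝ) :
    IntegrableOn (fun u : ℝ => u ^ n * Real.exp (-u)) (Set.Ioi a) := by
  have h0 : IntegrableOn (fun u : ℝ => u ^ n * Real.exp (-u)) (Set.Ioi 0) := by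
    have h := Real.GammaIntegral_convergent (s := (n + 1 : ℝ)) (by positivity)
    refine h.congr_fun ?_ measurableSet_Ioi
    intro x hx
    simp [add_sub_cancel_right, Real.rpow_natCast, mul_comm]
  rcases le_or_gt 0 a with h | h
  · exact h0.mono_set (Set.Ioi_subset_Ioi h)
  · rw [← Set.Ioc_union_Ioi_eq_Ioi h.le, integrableOn_union]
    exact ⟨(aux_cont n).integrableOn_Ioc, h0⟩

lemma uGamma_eq (N : ℕ) (a : ℝ) :
    uGamma N a = uGamma N 0 - ∫ u in (0:ℝ)..a, u ^ (N - 1) * Real.exp (-u) := by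
  rcases le_or_gt 0 a with h | h
  · have hsplit : uGamma N 0 = (∫ u in Set.Ioc 0 a, u ^ (N - 1) * Real.exp (-u)) + uGamma N a := by
      rw [uGamma, ← Set.Ioc_union_Ioi_eq_Ioi h,
        setIntegral_union (Set.Ioc_disjoint_Ioi le_rfl) measurableSet_Ioi
          ((aux_intOn (N - 1) 0).mono_set Set.Ioc_subset_Ioi_self) (aux_intOn (N - 1) a)]
      rfl
    rw [intervalIntegral.integral_of_le h, hsplit]; ring
  · have hsplit : uGamma N a = (∫ u in Set.Ioc a 0, u ^ (N - 1) * Real.exp (-u)) + uGamma N 0 := by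
      rw [uGamma, ← Set.Ioc_union_Ioi_eq_Ioi h.le,
        setIntegral_union (Set.Ioc_disjoint_Ioi le_rfl) measurableSet_Ioi
          ((aux_intOn (N - 1) a).mono_set Set.Ioc_subset_Ioi_self) (aux_intOn (N - 1) 0)]
      rfl
    rw [intervalIntegral.integral_symm, intervalIntegral.integral_of_le h.le, hsplit]; ring

lemma uGamma_hasDerivAt (N : ℕ) (a : ℝ) :
    HasDerivAt (uGamma N) (-(a ^ (N - 1) * Real.exp (-a))) a := by
  have hf := aux_cont (N - 1)
  have h : HasDerivAt (fun b => ∫ u in (0:ℝ)..b, u ^ (N - 1) * Real.exp (-u))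
      (a ^ (N - 1) * Real.exp (-a)) a :=
    intervalIntegral.integral_hasDerivAt_right (hf.intervalIntegrable _ _)
      (hf.aestronglyMeasurable.stronglyMeasurableAtFilter)
      hf.continuousAt
  have h2 := (hasDerivAt_const a (uGamma N 0)).fun_sub h
  have he : uGamma N = fun b => uGamma N 0 - ∫ u in (0:ℝ)..b, u ^ (N - 1) * Real.exp (-u) :=
    funext (uGamma_eq N)
  rw [he]
  simpa using h2

lemma uGamma_zero (N : ℕ) (hN : 1 ≤ N) : uGamma N 0 = Real.Gamma N := by
  rw [Real.Gamma_eq_integral (by positivity : (0:ℝ) < N), uGamma]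
  refine setIntegral_congr_fun measurableSet_Ioi fun x hx => ?_
  rw [show ((N:ℝ) - 1) = ((N - 1 : ℕ) : ℝ) by push_cast [Nat.cast_sub hN]; ring,
    Real.rpow_natCast, mul_comm]

theorem stmt_11 {ι : Type*} [Fintype ι]
    (N : ℕ) (hN : 1 ≤ N) (σ2 : ℝ) (hσ : 0 < σ2)
    (P : ι → ℝ) (hP : ∀ i, 0 < P i)
    (π : ι → ℝ) (hπ : ∀ i, 0 ≤ π i) (hπ1 : ∑ i, π i = 1)
    (hπpos : ∃ i, 0 < π i)
    (E : ℝ → ℝ)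
    (hE : ∀ t, E t = uGamma N (N * t / σ2) / Real.Gamma N +
        ∑ i, (1 - uGamma N (N * t / (P i + σ2)) / Real.Gamma N) * π i)
    (E' : ℝ → ℝ)
    (hE' : ∀ t, E' t = ((N : ℝ) / Real.Gamma N) * (N * t) ^ (N - 1) *
        ((∑ i, π i * (P i + σ2) ^ (-(N : ℤ)) * Real.exp (-(N * t) / (P i + σ2)))
          - σ2 ^ (-(N : ℤ)) * Real.exp (-(N * t) / σ2))) :
    (∀ t ∈ Set.Ioi (0 : ℝ), HasDerivAt E (E' t) t) ∧
    (∃ t₀ > (0 : ℝ), ∀ t ∈ Set.Ioo (0 : ℝ) t₀, E' t < 0) ∧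
    sInf (E '' Set.Ici 0) < 1 := by
  obtain ⟨n, rfl⟩ : ∃ n, N = n + 1 := ⟨N - 1, (Nat.succ_pred_eq_of_pos hN).symm⟩
  simp only [Nat.add_sub_cancel] at hE' ⊢
  have hΓ : (0:ℝ) < Real.Gamma (n + 1 : ℕ) := Real.Gamma_pos_of_pos (by positivity)
  -- composed derivative
  have hcomp : ∀ (c : ℝ), c ≠ 0 → ∀ t : ℝ,
      HasDerivAt (fun t : ℝ => uGamma (n+1) (((n+1:ℕ):ℝ) * t / c))
        (-(((((n+1:ℕ):ℝ) * t / c)) ^ n * Real.exp (-(((n+1:ℕ):ℝ) * t / c))) * (((n+1:ℕ):ℝ) / c)) t := by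
    intro c hc t
    have h1 : HasDerivAt (fun t : ℝ => ((n+1:ℕ):ℝ) * t / c) (((n+1:ℕ):ℝ) / c) t := by
      simpa using ((hasDerivAt_id t).const_mul ((n+1:ℕ):ℝ)).div_const c
    exact (uGamma_hasDerivAt (n+1) _).comp t h1
  have hD : ∀ t : ℝ, HasDerivAt E
      (-(((((n+1:ℕ):ℝ) * t / σ2)) ^ n * Real.exp (-(((n+1:ℕ):ℝ) * t / σ2))) * (((n+1:ℕ):ℝ) / σ2)
          / Real.Gamma (n+1:ℕ)
        + ∑ i, -(-(((((n+1:ℕ):ℝ) * t / (P i + σ2))) ^ n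
            * Real.exp (-(((n+1:ℕ):ℝ) * t / (P i + σ2)))) * (((n+1:ℕ):ℝ) / (P i + σ2))
          / Real.Gamma (n+1:ℕ)) * π i) t := by
    intro t
    have h0 := (hcomp σ2 hσ.ne' t).div_const (Real.Gamma (n+1:ℕ))
    have hs := HasDerivAt.fun_sum (u := Finset.univ) (fun i _ =>
      ((((hcomp (P i + σ2) (by have := hP i; positivity) t).div_const
        (Real.Gamma (n+1:ℕ))).const_sub 1).mul_const (π i)))
    exact ((h0.fun_add hs).congr_of_eventuallyEq (Filter.Eventually.of_forall hE))
  have hDE : ∀ t : ℝ, E' t =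
      (-(((((n+1:ℕ):ℝ) * t / σ2)) ^ n * Real.exp (-(((n+1:ℕ):ℝ) * t / σ2))) * (((n+1:ℕ):ℝ) / σ2)
          / Real.Gamma (n+1:ℕ)
        + ∑ i, -(-(((((n+1:ℕ):ℝ) * t / (P i + σ2))) ^ n
            * Real.exp (-(((n+1:ℕ):ℝ) * t / (P i + σ2)))) * (((n+1:ℕ):ℝ) / (P i + σ2))
          / Real.Gamma (n+1:ℕ)) * π i) := by
    intro t
    rw [hE', mul_sub, Finset.mul_sum, sub_eq_add_neg, add_comm]
    congr 1
    · simp only [zpow_neg, zpow_natCast, div_pow, neg_div]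
      field_simp
      ring
    · refine Finset.sum_congr rfl fun i _ => ?_
      have hc : (0:ℝ) < P i + σ2 := by have := hP i; positivity
      simp only [zpow_neg, zpow_natCast, div_pow, neg_div]
      field_simp
      ring
  have h1 : ∀ t ∈ Set.Ioi (0:ℝ), HasDerivAt E (E' t) t := fun t _ => (hDE t) ▸ hD t
  -- the key strict inequality
  have hkey : (∑ i, π i * (P i + σ2) ^ (-((n+1:ℕ) : ℤ))) < σ2 ^ (-((n+1:ℕ) : ℤ)) := by
    obtain ⟨i₀, hi₀⟩ := hπpos
    have hlt : ∀ i, (P i + σ2) ^ (-((n+1:ℕ):ℤ)) < σ2 ^ (-((n+1:ℕ):ℤ)) := by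
      intro i
      rw [zpow_neg, zpow_natCast, zpow_neg, zpow_natCast]
      have hpow : σ2 ^ (n+1) < (P i + σ2) ^ (n+1) :=
        pow_lt_pow_left₀ (by have := hP i; linarith) hσ.le (by omega)
      exact inv_strictAnti₀ (by positivity) hpow
    calc ∑ i, π i * (P i + σ2) ^ (-((n+1:ℕ):ℤ))
        < ∑ i, π i * σ2 ^ (-((n+1:ℕ):ℤ)) := by
          refine Finset.sum_lt_sum
            (fun i _ => mul_le_mul_of_nonneg_left (hlt i).le (hπ i))
            ⟨i₀, Finset.mem_univ _, mul_lt_mul_of_pos_left (hlt i₀) hi₀⟩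
      _ = σ2 ^ (-((n+1:ℕ):ℤ)) := by rw [← Finset.sum_mul, hπ1, one_mul]
  set g : ℝ → ℝ := fun t =>
      (∑ i, π i * (P i + σ2) ^ (-((n+1:ℕ):ℤ))
        * Real.exp (-(((n+1:ℕ):ℝ) * t) / (P i + σ2)))
      - σ2 ^ (-((n+1:ℕ):ℤ)) * Real.exp (-(((n+1:ℕ):ℝ) * t) / σ2) with hgdef
  have hgc : Continuous g := by
    apply Continuous.sub
    · exact continuous_finset_sum _ fun i _ => by fun_prop
    · fun_prop
  have hg0 : g 0 < 0 := by
    have : g 0 = (∑ i, π i * (P i + σ2) ^ (-((n+1:ℕ):ℤ))) - σ2 ^ (-((n+1:ℕ):ℤ)) := by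
      simp [hgdef]
    rw [this]
    linarith
  have hev : g ⁻¹' Set.Iio 0 ∈ nhds (0:ℝ) :=
    hgc.continuousAt.preimage_mem_nhds (Iio_mem_nhds hg0)
  obtain ⟨ε, hε, hball⟩ := Metric.mem_nhds_iff.mp hev
  have h2 : ∃ t₀ > (0:ℝ), ∀ t ∈ Set.Ioo (0:ℝ) t₀, E' t < 0 := by
    refine ⟨ε, hε, fun t ht => ?_⟩
    have hgt : g t < 0 := hball (by
      simp only [Metric.mem_ball, Real.dist_eq, sub_zero]
      rw [abs_of_pos ht.1]; exact ht.2)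
    rw [hE' t]
    have hmt : (0:ℝ) < ((n+1:ℕ):ℝ) * t :=
      mul_pos (by exact_mod_cast Nat.succ_pos n) ht.1
    have hK : 0 < ((n+1:ℕ):ℝ) / Real.Gamma (n+1:ℕ) * (((n+1:ℕ):ℝ) * t) ^ n :=
      mul_pos (div_pos (by exact_mod_cast Nat.succ_pos n) hΓ) (pow_pos hmt n)
    exact mul_neg_of_pos_of_neg hK hgt
  refine ⟨h1, h2, ?_⟩
  have hE0 : E 0 = 1 := by
    rw [hE 0]
    simp only [mul_zero, zero_div]
    rw [uGamma_zero (n+1) (by omega), div_self hΓ.ne']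
    simp
  obtain ⟨t₀, ht₀, hneg⟩ := h2
  have hanti : StrictAntiOn E (Set.Icc 0 t₀) := by
    apply strictAntiOn_of_deriv_neg (convex_Icc 0 t₀)
    · exact (Differentiable.continuous fun t => (hD t).differentiableAt).continuousOn
    · intro x hx
      rw [interior_Icc] at hx
      rw [(h1 x hx.1).deriv]
      exact hneg x hx
  have hlt : E t₀ < 1 := by
    have := hanti (Set.left_mem_Icc.mpr ht₀.le) (Set.right_mem_Icc.mpr ht₀.le) ht₀
    rwa [hE0] at this
  by_cases hb : BddBelow (E '' Set.Ici 0)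
  · exact lt_of_le_of_lt (csInf_le hb ⟨t₀, Set.mem_Ici.mpr ht₀.le, rfl⟩) hlt
  · rw [Real.sInf_of_not_bddBelow hb]; norm_num
end
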